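/- arXiv:2104.05864 — 3 statements merged into one kernel-verified Lean document; each statement's English description precedes it below -/
import Mathlib

section
/- Existence of the first Brocard point: for any triangle ABC there exists a point Ω inside the triangle such that the angles ∠ΩAB, ∠ΩBC, and ∠ΩCA are all equal. -/
/-!
With `a = BC`, `b = CA`, `c = AB`, take `Ω` with barycentric coordinates
`(c²a² : a²b² : b²c²) = (1/b² : 1/c² : 1/a²)`; these are positive, so `Ω` lies inside the
triangle. A direct computation gives `AΩ = b²c / √D` with `D = a²b² + b²c² + c²a²`, and then
`cos ∠ΩAB = (a² + b² + c²) / (2√D)`. Both `Ω` and this value are invariant under the cyclic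
relabelling `A → B → C → A`, which carries `∠ΩAB` to `∠ΩBC` and then to `∠ΩCA`.
-/

open EuclideanGeometry

noncomputable instance : Fact (Module.finrank ℝ (EuclideanSpace ℝ (Fin 2)) = 2) :=
  ⟨finrank_euclideanSpace_fin⟩

noncomputable instance : Module.Oriented ℝ (EuclideanSpace ℝ (Fin 2)) (Fin 2) :=
  ⟨Module.Basis.orientation (PiLp.basisFun 2 ℝ (Fin 2))⟩

open Module
open scoped RealInnerProductSpace

section Brocard

variable {V P : Type*} [NormedAddCommGroup V] [InnerProductSpace ℝ V] [MetricSpace P]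
  [NormedAddTorsor V P]

theorem inner_vsub_vsub_eq_dist_sq (A B C : P) :
    ⟪B -ᵥ A, C -ᵥ A⟫ = (dist A B ^ 2 + dist C A ^ 2 - dist B C ^ 2) / 2 := by
  rw [dist_eq_norm_vsub' V A B, dist_eq_norm_vsub V C A, dist_eq_norm_vsub' V B C,
    ← vsub_sub_vsub_cancel_right C B A, norm_sub_sq_real, real_inner_comm]
  ring

noncomputable def brocardDenom (A B C : P) : ℝ :=
  dist B C ^ 2 * dist C A ^ 2 + dist C A ^ 2 * dist A B ^ 2 + dist A B ^ 2 * dist B C ^ 2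

noncomputable def brocardPoint (A B C : P) : P :=
  ((dist B C ^ 2 * dist C A ^ 2 / brocardDenom A B C) • (B -ᵥ A) +
    (dist C A ^ 2 * dist A B ^ 2 / brocardDenom A B C) • (C -ᵥ A)) +ᵥ A

noncomputable def brocardAngle (A B C : P) : ℝ :=
  Real.arccos ((dist A B ^ 2 + dist B C ^ 2 + dist C A ^ 2) / (2 * √(brocardDenom A B C)))

theorem brocardDenom_rotate (A B C : P) : brocardDenom B C A = brocardDenom A B C := by
  unfold brocardDenom
  ring

theorem brocardDenom_pos {A B C : P} (hAB : A ≠ B) (hCA : C ≠ A) : 0 < brocardDenom A B C := by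
  have hc := dist_pos.2 hAB
  have hb := dist_pos.2 hCA
  unfold brocardDenom
  positivity

theorem brocardAngle_rotate (A B C : P) : brocardAngle B C A = brocardAngle A B C := by
  rw [brocardAngle, brocardAngle, brocardDenom_rotate]
  congr 2
  ring

theorem brocardPoint_rotate {A B C : P} (h : brocardDenom A B C ≠ 0) :
    brocardPoint B C A = brocardPoint A B C := by
  have key : dist C A ^ 2 * dist A B ^ 2 / brocardDenom A B C +
      dist A B ^ 2 * dist B C ^ 2 / brocardDenom A B C +
      dist B C ^ 2 * dist C A ^ 2 / brocardDenom A B C = 1 := by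
    rw [← add_div, ← add_div, div_eq_one_iff_eq h, brocardDenom]
    ring
  rw [brocardPoint, brocardPoint, brocardDenom_rotate, eq_vadd_iff_vsub_eq, vadd_vsub_assoc,
    ← vsub_sub_vsub_cancel_right C B A, ← neg_vsub_eq_vsub_rev B A]
  linear_combination (norm := module) -key • (B -ᵥ A)

theorem inner_brocardPoint_vsub_vsub {A B C : P} (h : brocardDenom A B C ≠ 0) :
    ⟪brocardPoint A B C -ᵥ A, B -ᵥ A⟫ = dist C A ^ 2 * dist A B ^ 2 *
      (dist A B ^ 2 + dist B C ^ 2 + dist C A ^ 2) / (2 * brocardDenom A B C) := by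
  rw [brocardPoint, vadd_vsub, inner_add_left, real_inner_smul_left, real_inner_smul_left,
    real_inner_self_eq_norm_sq, real_inner_comm, inner_vsub_vsub_eq_dist_sq,
    ← dist_eq_norm_vsub' V]
  field_simp
  ring

theorem dist_brocardPoint_left {A B C : P} (h : 0 < brocardDenom A B C) :
    dist (brocardPoint A B C) A = dist C A ^ 2 * dist A B / √(brocardDenom A B C) := by
  have hsq : dist (brocardPoint A B C) A ^ 2 =
      (dist C A ^ 2 * dist A B) ^ 2 / brocardDenom A B C := by
    rw [dist_eq_norm_vsub V, brocardPoint, vadd_vsub, norm_add_sq_real, norm_smul, norm_smul,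
      real_inner_smul_left, real_inner_smul_right, inner_vsub_vsub_eq_dist_sq,
      ← dist_eq_norm_vsub' V, ← dist_eq_norm_vsub V, Real.norm_eq_abs, Real.norm_eq_abs,
      mul_pow, mul_pow, sq_abs, sq_abs]
    field_simp
    unfold brocardDenom
    ring
  rw [← Real.sqrt_sq dist_nonneg, hsq, Real.sqrt_div' _ h.le, Real.sqrt_sq (by positivity)]

theorem angle_brocardPoint {A B C : P} (hAB : A ≠ B) (hCA : C ≠ A) :
    ∠ (brocardPoint A B C) A B = brocardAngle A B C := by
  have hD := brocardDenom_pos hAB hCA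
  have hc := dist_pos.2 hAB
  have hb := dist_pos.2 hCA
  rw [EuclideanGeometry.angle, InnerProductGeometry.angle, brocardAngle,
    inner_brocardPoint_vsub_vsub hD.ne', ← dist_eq_norm_vsub V, ← dist_eq_norm_vsub' V,
    dist_brocardPoint_left hD]
  congr 1
  field_simp
  exact Real.sq_sqrt hD.le

theorem smul_vsub_add_smul_vsub_vadd_mem_interior_convexHull [Fact (finrank ℝ V = 2)]
    {A B C : V} (h : ¬Collinear ℝ {A, B, C}) {s t : ℝ} (hs : 0 < s) (ht : 0 < t)
    (hst : s + t < 1) :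
    (s • (B -ᵥ A) + t • (C -ᵥ A)) +ᵥ A ∈ interior (convexHull ℝ {A, B, C}) := by
  have := FiniteDimensional.of_fact_finrank_eq_two (K := ℝ) (V := V)
  have hind : AffineIndependent ℝ ![A, B, C] := affineIndependent_iff_not_collinear_set.mpr h
  have hspan : affineSpan ℝ (Set.range ![A, B, C]) = ⊤ := by
    rw [hind.affineSpan_eq_top_iff_card_eq_finrank_add_one, Fact.out (p := finrank ℝ V = 2)]
    simp
  let b : AffineBasis (Fin 3) ℝ V := ⟨![A, B, C], hind, hspan⟩
  have hb : Set.range b = {A, B, C} := by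
    change Set.range ![A, B, C] = _
    rw [Matrix.range_cons, Matrix.range_cons_cons_empty, Set.singleton_union]
  have hw : ∑ i, ![1 - s - t, s, t] i = 1 := by
    simp only [Fin.sum_univ_three, Matrix.cons_val_zero, Matrix.cons_val_one,
      Matrix.cons_val_two, Matrix.head_cons, Matrix.tail_cons]
    ring
  have hcomb : (s • (B -ᵥ A) + t • (C -ᵥ A)) +ᵥ A =
      Finset.univ.affineCombination ℝ b ![1 - s - t, s, t] := by
    change _ = Finset.univ.affineCombination ℝ ![A, B, C] _
    rw [Finset.affineCombination_eq_linear_combination _ _ _ hw, Fin.sum_univ_three]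
    simp only [vsub_eq_sub, vadd_eq_add, Matrix.cons_val_zero, Matrix.cons_val_one,
      Matrix.cons_val_two, Matrix.head_cons, Matrix.tail_cons]
    module
  rw [← hb, b.interior_convexHull, hcomb]
  intro i
  rw [b.coord_apply_combination_of_mem (Finset.mem_univ i) hw]
  fin_cases i <;> simp <;> linarith

theorem brocardPoint_mem_interior_convexHull [Fact (finrank ℝ V = 2)] {A B C : V}
    (h : ¬Collinear ℝ {A, B, C}) :
    brocardPoint A B C ∈ interior (convexHull ℝ {A, B, C}) := by
  have hAB := ne₁₂_of_not_collinear h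
  have hCA := (ne₁₃_of_not_collinear h).symm
  have hc := dist_pos.2 hAB
  have ha := dist_pos.2 (ne₂₃_of_not_collinear h)
  have hb := dist_pos.2 hCA
  have hD := brocardDenom_pos hAB hCA
  apply smul_vsub_add_smul_vsub_vadd_mem_interior_convexHull h (by positivity) (by positivity)
  rw [← add_div, div_lt_one hD, brocardDenom]
  linarith [mul_pos (pow_pos hc 2) (pow_pos ha 2)]

end Brocard

theorem brocard_point_exists_general
    (A B C : EuclideanSpace ℝ (Fin 2))
    (h : ¬ Collinear ℝ ({A, B, C} : Set (EuclideanSpace ℝ (Fin 2)))) :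
    ∃ Ω : EuclideanSpace ℝ (Fin 2),
      Ω ∈ interior (convexHull ℝ ({A, B, C} : Set (EuclideanSpace ℝ (Fin 2)))) ∧
      ∠ Ω A B = ∠ Ω B C ∧ ∠ Ω B C = ∠ Ω C A := by
  have hAB := ne₁₂_of_not_collinear h
  have hBC := ne₂₃_of_not_collinear h
  have hCA := (ne₁₃_of_not_collinear h).symm
  have hΩB : brocardPoint B C A = brocardPoint A B C :=
    brocardPoint_rotate (brocardDenom_pos hAB hCA).ne'
  have hΩC : brocardPoint C A B = brocardPoint A B C :=
    (brocardPoint_rotate (brocardDenom_pos hBC hAB).ne').trans hΩB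
  have hA : ∠ (brocardPoint A B C) A B = brocardAngle A B C := angle_brocardPoint hAB hCA
  have hB : ∠ (brocardPoint A B C) B C = brocardAngle A B C := by
    rw [← hΩB, angle_brocardPoint hBC hAB, brocardAngle_rotate]
  have hC : ∠ (brocardPoint A B C) C A = brocardAngle A B C := by
    rw [← hΩC, angle_brocardPoint hCA hBC, brocardAngle_rotate, brocardAngle_rotate]
  exact ⟨brocardPoint A B C, brocardPoint_mem_interior_convexHull h, hA.trans hB.symm,
    hB.trans hC.symm⟩

theorem brocard_point_exists
    (A B C : EuclideanSpace ℝ (Fin 2))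
    (h : ¬ Collinear ℝ ({A, B, C} : Set (EuclideanSpace ℝ (Fin 2))))
    (horient : (∡ A B C).sign = 1) :
    ∃ Ω : EuclideanSpace ℝ (Fin 2),
      Ω ∈ interior (convexHull ℝ ({A, B, C} : Set (EuclideanSpace ℝ (Fin 2)))) ∧
      ∠ Ω A B = ∠ Ω B C ∧ ∠ Ω B C = ∠ Ω C A :=
  brocard_point_exists_general A B C h
end

section
/- The three circles defining the Brocard point are concurrent: the circle through C and A tangent to AB at A, the circle through A and B tangent to BC at B, and the circle through B and C tangent to CA at C all pass through a common point. -/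
open EuclideanGeometry RealInnerProductSpace

private lemma dist_sq_eq (x y : EuclideanSpace ℝ (Fin 2)) :
    dist x y = Real.sqrt ((x 0 - y 0)^2 + (x 1 - y 1)^2) := by
  rw [EuclideanSpace.dist_eq, Fin.sum_univ_two]
  simp [Real.dist_eq, sq_abs]

private lemma dist_congr (x y z w : EuclideanSpace ℝ (Fin 2))
    (h : (x 0 - y 0)^2 + (x 1 - y 1)^2 = (z 0 - w 0)^2 + (z 1 - w 1)^2) :
    dist x y = dist z w := by
  rw [dist_sq_eq, dist_sq_eq, h]

private lemma sq_of_dist_eq (x y z w : EuclideanSpace ℝ (Fin 2))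
    (h : dist x y = dist z w) :
    (x 0 - y 0)^2 + (x 1 - y 1)^2 = (z 0 - w 0)^2 + (z 1 - w 1)^2 := by
  rw [dist_sq_eq, dist_sq_eq] at h
  have h1 : (0:ℝ) ≤ (x 0 - y 0)^2 + (x 1 - y 1)^2 := by positivity
  have h2 : (0:ℝ) ≤ (z 0 - w 0)^2 + (z 1 - w 1)^2 := by positivity
  calc (x 0 - y 0)^2 + (x 1 - y 1)^2 = Real.sqrt ((x 0 - y 0)^2 + (x 1 - y 1)^2) ^ 2 := (Real.sq_sqrt h1).symm
    _ = Real.sqrt ((z 0 - w 0)^2 + (z 1 - w 1)^2) ^ 2 := by rw [h]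
    _ = _ := Real.sq_sqrt h2

private lemma ne_of_noncol (A B C : EuclideanSpace ℝ (Fin 2))
    (h : ¬ Collinear ℝ ({A, B, C} : Set (EuclideanSpace ℝ (Fin 2)))) :
    A ≠ B ∧ B ≠ C ∧ A ≠ C := by
  refine ⟨?_, ?_, ?_⟩ <;> rintro rfl <;> apply h
  · have : ({A, A, C} : Set (EuclideanSpace ℝ (Fin 2))) = {A, C} := by
      simp [Set.insert_comm, Set.pair_comm]
    rw [this]; exact collinear_pair ℝ A C
  · have : ({A, B, B} : Set (EuclideanSpace ℝ (Fin 2))) = {A, B} := by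
      simp
    rw [this]; exact collinear_pair ℝ A B
  · have : ({A, B, A} : Set (EuclideanSpace ℝ (Fin 2))) = {A, B} := by
      simp [Set.insert_comm, Set.pair_comm]
    rw [this]; exact collinear_pair ℝ A B

private lemma sq_pos_of_ne (x y : EuclideanSpace ℝ (Fin 2)) (h : x ≠ y) :
    0 < (x 0 - y 0)^2 + (x 1 - y 1)^2 := by
  rcases eq_or_ne (x 0) (y 0) with h0 | h0
  · rcases eq_or_ne (x 1) (y 1) with h1 | h1
    · exfalso; apply h; ext i; fin_cases i <;> assumption
    · have : x 1 - y 1 ≠ 0 := sub_ne_zero.mpr h1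
      positivity
  · have : x 0 - y 0 ≠ 0 := sub_ne_zero.mpr h0
    positivity

private lemma key (a0 a1 b0 b1 c0 c1 o0 o1 sa sb sc Q p0 p1 : ℝ)
    (hsa : sa = (b0 - c0)^2 + (b1 - c1)^2)
    (hsb : sb = (c0 - a0)^2 + (c1 - a1)^2)
    (hsc : sc = (a0 - b0)^2 + (a1 - b1)^2)
    (hQ : Q = sa*sb + sb*sc + sc*sa) (hQne : Q ≠ 0)
    (hp0 : p0 = (sa*sc*a0 + sa*sb*b0 + sb*sc*c0)/Q)
    (hp1 : p1 = (sa*sc*a1 + sa*sb*b1 + sb*sc*c1)/Q)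
    (hT : (o0 - a0)*(b0 - a0) + (o1 - a1)*(b1 - a1) = 0)
    (hE : (a0 - o0)^2 + (a1 - o1)^2 = (c0 - o0)^2 + (c1 - o1)^2) :
    (p0 - o0)^2 + (p1 - o1)^2 = (a0 - o0)^2 + (a1 - o1)^2 := by
  set W0 : ℝ := sa*sb*(b0-a0) + sb*sc*(c0-a0) with hW0
  set W1 : ℝ := sa*sb*(b1-a1) + sb*sc*(c1-a1) with hW1
  have hin : (c0-a0)*(o0-a0) + (c1-a1)*(o1-a1) = sb/2 := by
    linear_combination hE/2 - hsb/2
  have hW : W0^2 + W1^2 = sb^2*sc*Q := by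
    rw [hW0, hW1]
    linear_combination (-(sb^2*sc))*hQ + (sb^2*sa*sc)*hsa +
      (-(sb^2*sc)*(sa+sc))*hsb + (-(sb^2*sa)*(sa+sc))*hsc
  have hdotW : W0*(a0-o0) + W1*(a1-o1) = -(sb^2*sc)/2 := by
    rw [hW0, hW1]
    linear_combination (-(sb*sc))*hin + (-(sa*sb))*hT
  have hpo0 : p0 - o0 = (W0 + Q*(a0-o0))/Q := by
    rw [hp0, hW0]; field_simp; linear_combination (-a0)*hQ
  have hpo1 : p1 - o1 = (W1 + Q*(a1-o1))/Q := by
    rw [hp1, hW1]; field_simp; linear_combination (-a1)*hQ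
  have hnum : (W0+Q*(a0-o0))^2 + (W1+Q*(a1-o1))^2 = Q^2*((a0-o0)^2+(a1-o1)^2) := by
    linear_combination hW + (2*Q)*hdotW
  rw [hpo0, hpo1, div_pow, div_pow, ← add_div, hnum,
    mul_div_cancel_left₀ _ (pow_ne_zero 2 hQne)]

theorem brocard_circles_concurrent
    (A B C : EuclideanSpace ℝ (Fin 2))
    (h : ¬ Collinear ℝ ({A, B, C} : Set (EuclideanSpace ℝ (Fin 2))))
    (s₁ s₂ s₃ : EuclideanGeometry.Sphere (EuclideanSpace ℝ (Fin 2)))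
    (h1A : A ∈ s₁) (h1C : C ∈ s₁) (h1t : ⟪s₁.center - A, B - A⟫ = 0)
    (h2B : B ∈ s₂) (h2A : A ∈ s₂) (h2t : ⟪s₂.center - B, C - B⟫ = 0)
    (h3C : C ∈ s₃) (h3B : B ∈ s₃) (h3t : ⟪s₃.center - C, A - C⟫ = 0) :
    ∃ P : EuclideanSpace ℝ (Fin 2), P ∈ s₁ ∧ P ∈ s₂ ∧ P ∈ s₃ := by
  obtain ⟨hAB, hBC, hAC⟩ := ne_of_noncol A B C h
  set sa : ℝ := (B 0 - C 0)^2 + (B 1 - C 1)^2 with hsa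
  set sb : ℝ := (C 0 - A 0)^2 + (C 1 - A 1)^2 with hsb
  set sc : ℝ := (A 0 - B 0)^2 + (A 1 - B 1)^2 with hsc
  have hsapos : 0 < sa := sq_pos_of_ne B C hBC
  have hsbpos : 0 < sb := sq_pos_of_ne C A (Ne.symm hAC)
  have hscpos : 0 < sc := sq_pos_of_ne A B hAB
  set Q : ℝ := sa*sb + sb*sc + sc*sa with hQ
  have hQne : Q ≠ 0 := by positivity
  set P : EuclideanSpace ℝ (Fin 2) :=
    (WithLp.equiv 2 (Fin 2 → ℝ)).symm
      (fun i => (sa*sc*(A i) + sa*sb*(B i) + sb*sc*(C i))/Q) with hP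
  have hP0 : P 0 = (sa*sc*(A 0) + sa*sb*(B 0) + sb*sc*(C 0))/Q := by rw [hP]; simp
  have hP1 : P 1 = (sa*sc*(A 1) + sa*sb*(B 1) + sb*sc*(C 1))/Q := by rw [hP]; simp
  refine ⟨P, ?_, ?_, ?_⟩
  · rw [EuclideanGeometry.mem_sphere] at h1A ⊢
    rw [← h1A]
    apply dist_congr
    have hE := sq_of_dist_eq A s₁.center C s₁.center
      (h1A.trans (EuclideanGeometry.mem_sphere.mp h1C).symm)
    have hT : (s₁.center 0 - A 0) * (B 0 - A 0) + (s₁.center 1 - A 1) * (B 1 - A 1) = 0 := by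
      have h' := h1t; simp [PiLp.inner_apply, Fin.sum_univ_two] at h'; linear_combination h'
    exact key (A 0) (A 1) (B 0) (B 1) (C 0) (C 1) (s₁.center 0) (s₁.center 1)
      sa sb sc Q (P 0) (P 1) hsa hsb hsc hQ hQne hP0 hP1 hT hE
  · rw [EuclideanGeometry.mem_sphere] at h2B ⊢
    rw [← h2B]
    apply dist_congr
    have hE := sq_of_dist_eq B s₂.center A s₂.center
      (h2B.trans (EuclideanGeometry.mem_sphere.mp h2A).symm)
    have hT : (s₂.center 0 - B 0) * (C 0 - B 0) + (s₂.center 1 - B 1) * (C 1 - B 1) = 0 := by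
      have h' := h2t; simp [PiLp.inner_apply, Fin.sum_univ_two] at h'; linear_combination h'
    exact key (B 0) (B 1) (C 0) (C 1) (A 0) (A 1) (s₂.center 0) (s₂.center 1)
      sb sc sa Q (P 0) (P 1)
      (by rw [hsb]) (by rw [hsc]) (by rw [hsa])
      (by rw [hQ]; ring) hQne (by rw [hP0]; ring) (by rw [hP1]; ring) hT hE
  · rw [EuclideanGeometry.mem_sphere] at h3C ⊢
    rw [← h3C]
    apply dist_congr
    have hE := sq_of_dist_eq C s₃.center B s₃.center
      (h3C.trans (EuclideanGeometry.mem_sphere.mp h3B).symm)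
    have hT : (s₃.center 0 - C 0) * (A 0 - C 0) + (s₃.center 1 - C 1) * (A 1 - C 1) = 0 := by
      have h' := h3t; simp [PiLp.inner_apply, Fin.sum_univ_two] at h'; linear_combination h'
    exact key (C 0) (C 1) (A 0) (A 1) (B 0) (B 1) (s₃.center 0) (s₃.center 1)
      sc sa sb Q (P 0) (P 1)
      (by rw [hsc]) (by rw [hsa]) (by rw [hsb])
      (by rw [hQ]; ring) hQne (by rw [hP0]; ring) (by rw [hP1]; ring) hT hE
end

section
/- The Brocard angle of any triangle is at most π/6. -/
open Real

lemma one_div_tan_eq (x : ℝ) : 1 / Real.tan x = Real.cos x / Real.sin x := by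
  rw [Real.tan_eq_sin_div_cos, one_div_div]

lemma cot_eq_iff (A : ℝ) (h1 : 0 < A) (h2 : A < π)
    (h : Real.cos A / Real.sin A = Real.sqrt 3 / 3) : A = π / 3 := by
  have hs : 0 < Real.sin A := Real.sin_pos_of_pos_of_lt_pi h1 h2
  have hsq3 : Real.sqrt 3 * Real.sqrt 3 = 3 := Real.mul_self_sqrt (by norm_num)
  have hsq3pos : (0:ℝ) < Real.sqrt 3 := Real.sqrt_pos.2 (by norm_num)
  have hcos : Real.cos A = Real.sin A * (Real.sqrt 3 / 3) := by
    field_simp at h ⊢; linarith [h]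
  have hcpos : 0 < Real.cos A := by rw [hcos]; positivity
  have hA2 : A < π / 2 := by
    by_contra hcon
    push_neg at hcon
    have := Real.cos_nonpos_of_pi_div_two_le_of_le hcon (by linarith [Real.pi_pos])
    linarith
  have htan : Real.tan A = Real.sqrt 3 := by
    rw [Real.tan_eq_sin_div_cos, hcos, div_eq_iff (by positivity)]
    nlinarith [hs]
  have hpi := Real.pi_pos
  exact Real.tan_inj_of_lt_of_lt_pi_div_two (by linarith) hA2 (by linarith)
    (by linarith) (by rw [htan, Real.tan_pi_div_three])

set_option maxHeartbeats 1000000 in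
theorem brocard_angle_le_pi_div_six
    (A B C ω : ℝ)
    (hA : 0 < A) (hB : 0 < B) (hC : 0 < C)
    (hsum : A + B + C = π)
    (hω : ω ∈ Set.Ioo 0 (π / 2))
    (hcot : 1 / Real.tan ω = 1 / Real.tan A + 1 / Real.tan B + 1 / Real.tan C) :
    ω ≤ π / 6 ∧ (ω = π / 6 ↔ A = π / 3 ∧ B = π / 3 ∧ C = π / 3) := by
  obtain ⟨hω0, hω2⟩ := hω
  have hpi := Real.pi_pos
  have hA' : A < π := by linarith
  have hB' : B < π := by linarith
  have hC' : C < π := by linarith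
  have hsA : 0 < Real.sin A := Real.sin_pos_of_pos_of_lt_pi hA hA'
  have hsB : 0 < Real.sin B := Real.sin_pos_of_pos_of_lt_pi hB hB'
  have hsC : 0 < Real.sin C := Real.sin_pos_of_pos_of_lt_pi hC hC'
  set x := Real.cos A / Real.sin A with hx
  set y := Real.cos B / Real.sin B with hy
  set z := Real.cos C / Real.sin C with hz
  have hCval : C = π - (A + B) := by linarith
  have hsC' : Real.sin C = Real.sin A * Real.cos B + Real.cos A * Real.sin B := by
    rw [hCval, Real.sin_pi_sub, Real.sin_add]
  have hcC' : Real.cos C = Real.sin A * Real.sin B - Real.cos A * Real.cos B := by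
    rw [hCval, Real.cos_pi_sub, Real.cos_add]; ring
  have hne : Real.sin A * Real.cos B + Real.cos A * Real.sin B ≠ 0 := hsC' ▸ hsC.ne'
  have hkey : x * y + y * z + z * x = 1 := by
    rw [hx, hy, hz, hsC', hcC']
    field_simp
    ring
  have hsum3 : 1 / Real.tan ω = x + y + z := by
    rw [hcot, one_div_tan_eq, one_div_tan_eq, one_div_tan_eq]
  have htanω : 0 < Real.tan ω := Real.tan_pos_of_pos_of_lt_pi_div_two hω0 hω2
  have hspos : 0 < x + y + z := by rw [← hsum3]; positivity
  have hsq3 : Real.sqrt 3 * Real.sqrt 3 = 3 := Real.mul_self_sqrt (by norm_num)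
  have hsq3pos : (0:ℝ) < Real.sqrt 3 := Real.sqrt_pos.2 (by norm_num)
  have hge : Real.sqrt 3 ≤ x + y + z := by
    nlinarith [sq_nonneg (x - y), sq_nonneg (y - z), sq_nonneg (x - z),
      sq_nonneg (x + y + z - Real.sqrt 3), sq_nonneg (x + y + z + Real.sqrt 3)]
  have htan6 : Real.tan (π / 6) = Real.sqrt 3 / 3 := by
    rw [Real.tan_pi_div_six, div_eq_div_iff hsq3pos.ne' (by norm_num : (3:ℝ) ≠ 0)]
    linarith [hsq3]
  have htanle : Real.tan ω ≤ Real.sqrt 3 / 3 := by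
    have h1 : Real.sqrt 3 ≤ 1 / Real.tan ω := by rw [hsum3]; exact hge
    have h2 : Real.tan ω * Real.sqrt 3 ≤ 1 := by
      have := mul_le_mul_of_nonneg_left h1 htanω.le
      rwa [mul_one_div, div_self htanω.ne'] at this
    rw [le_div_iff₀ (by norm_num : (0:ℝ) < 3)]
    nlinarith [mul_le_mul_of_nonneg_left h2 hsq3pos.le]
  constructor
  · by_contra hcon
    push_neg at hcon
    have h5 := Real.tan_lt_tan_of_nonneg_of_lt_pi_div_two (by positivity) hω2 hcon
    rw [htan6] at h5
    linarith
  · have hinv : ∀ t : ℝ, Real.tan t = Real.sqrt 3 / 3 → 1 / Real.tan t = Real.sqrt 3 := by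
      intro t ht
      rw [ht, one_div_div, div_eq_iff hsq3pos.ne', hsq3]
    constructor
    · intro h6
      have h13 : 1 / Real.tan ω = Real.sqrt 3 := hinv ω (by rw [h6, htan6])
      have hsval : x + y + z = Real.sqrt 3 := by rw [← hsum3, h13]
      have hs2 : (x + y + z) ^ 2 = 3 := by rw [hsval, sq, hsq3]
      have h0 : (x - y) ^ 2 + (y - z) ^ 2 + (z - x) ^ 2 = 0 := by
        linear_combination 2 * hs2 - 6 * hkey
      have hxy : x = y := by
        have h1 : (x - y) ^ 2 = 0 := by nlinarith [sq_nonneg (y - z), sq_nonneg (z - x)]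
        have := (pow_eq_zero_iff two_ne_zero).mp h1
        linarith
      have hyz : y = z := by
        have h1 : (y - z) ^ 2 = 0 := by nlinarith [sq_nonneg (x - y), sq_nonneg (z - x)]
        have := (pow_eq_zero_iff two_ne_zero).mp h1
        linarith
      have hxv : x = Real.sqrt 3 / 3 := by
        rw [hxy, hyz] at hsval; linarith
      exact ⟨cot_eq_iff A hA hA' (by rw [← hx]; exact hxv), cot_eq_iff B hB hB' (by rw [← hy, ← hxy]; exact hxv),
        cot_eq_iff C hC hC' (by rw [← hz, ← hyz, ← hxy]; exact hxv)⟩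
    · rintro ⟨ha, hb, hc⟩
      have hval : ∀ t : ℝ, t = π / 3 → Real.cos t / Real.sin t = Real.sqrt 3 / 3 := by
        intro t ht
        rw [ht, Real.cos_pi_div_three, Real.sin_pi_div_three,
          div_eq_div_iff (by positivity) (by norm_num)]
        nlinarith [hsq3]
      have hcotω : 1 / Real.tan ω = Real.sqrt 3 := by
        rw [hsum3, hx, hy, hz, hval A ha, hval B hb, hval C hc]
        field_simp
        linarith [hsq3]
      have htω : Real.tan ω = Real.sqrt 3 / 3 := by
        have h2 : Real.sqrt 3 * Real.tan ω = 1 := by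
          field_simp at hcotω
          linarith [hcotω]
        rw [eq_div_iff (by norm_num : (3:ℝ) ≠ 0)]
        have h3 : Real.sqrt 3 * (Real.tan ω * 3) = Real.sqrt 3 * Real.sqrt 3 := by
          rw [hsq3]; nlinarith [h2]
        exact mul_left_cancel₀ hsq3pos.ne' h3
      exact Real.tan_inj_of_lt_of_lt_pi_div_two (by linarith) hω2 (by linarith)
        (by linarith) (by rw [htω, htan6])
end
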